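/- Let f : ℝ^d → ℝ be L-smooth, satisfy the μ-PL condition ‖∇f(x)‖² ≥ 2μ(f(x) - f*) for all x where f* = inf f, and let β ∈ [0,1), η > 0. For any x, m ∈ ℝ^d, setting w = x - (βη/(1-β)) m, it holds that ‖∇f(x)‖² ≥ μ(f(w) - f*) - (μ(μ+L)β²η²/(2(1-β)²)) ‖m‖². -/

import Mathlib

open InnerProductSpace

lemma descent_lemma {d : ℕ} (f : EuclideanSpace ℝ (Fin d) → ℝ)
    (f' : EuclideanSpace ℝ (Fin d) → EuclideanSpace ℝ (Fin d))
    (L : ℝ) (hL : 0 ≤ L)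
    (hgrad : ∀ x, HasGradientAt f (f' x) x)
    (hsmooth : ∀ x y, ‖f' x - f' y‖ ≤ L * ‖x - y‖) (x y : EuclideanSpace ℝ (Fin d)) :
    f y ≤ f x + inner ℝ (f' x) (y - x) + L / 2 * ‖y - x‖ ^ 2 := by
  set v := y - x with hv
  set h : ℝ → ℝ := fun t =>
    f (x + t • v) - t * inner ℝ (f' x) v - L / 2 * t ^ 2 * ‖v‖ ^ 2 with hh
  have hder : ∀ t : ℝ, HasDerivAt h
      ((inner ℝ (f' (x + t • v)) v : ℝ) - inner ℝ (f' x) v - L * t * ‖v‖ ^ 2) t := by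
    intro t
    have hline : HasDerivAt (fun t : ℝ => x + t • v) v t := by
      simpa using ((hasDerivAt_id t).smul_const v).const_add x
    have h1 : HasDerivAt (fun t : ℝ => f (x + t • v))
        ((inner ℝ (f' (x + t • v)) v : ℝ)) t := by
      have := ((hgrad (x + t • v)).hasFDerivAt).comp_hasDerivAt t hline
      exact this
    have h2 : HasDerivAt (fun t : ℝ => t * (inner ℝ (f' x) v : ℝ))
        ((inner ℝ (f' x) v : ℝ)) t := by
      simpa using (hasDerivAt_id t).mul_const (inner ℝ (f' x) v : ℝ)
    have h3 : HasDerivAt (fun t : ℝ => L / 2 * t ^ 2 * ‖v‖ ^ 2)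
        (L * t * ‖v‖ ^ 2) t := by
      have := ((hasDerivAt_pow 2 t).const_mul (L / 2)).mul_const (‖v‖ ^ 2)
      exact this.congr_deriv (by rw [show (2:ℕ) - 1 = 1 from rfl]; ring)
    exact (h1.sub h2).sub h3
  have hmono : AntitoneOn h (Set.Icc (0 : ℝ) 1) := by
    apply antitoneOn_of_deriv_nonpos (convex_Icc 0 1)
    · exact fun t _ => (hder t).continuousAt.continuousWithinAt
    · intro t _
      exact ((hder t).differentiableAt).differentiableWithinAt
    · intro t ht
      rw [interior_Icc] at ht
      rw [(hder t).deriv]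
      have cs : (inner ℝ (f' (x + t • v)) v : ℝ) - inner ℝ (f' x) v
          ≤ ‖f' (x + t • v) - f' x‖ * ‖v‖ := by
        have := real_inner_le_norm (f' (x + t • v) - f' x) v
        rwa [inner_sub_left] at this
      have hlip : ‖f' (x + t • v) - f' x‖ ≤ L * (t * ‖v‖) := by
        have := hsmooth (x + t • v) x
        simpa [norm_smul, abs_of_nonneg ht.1.le] using this
      nlinarith [norm_nonneg v, mul_le_mul_of_nonneg_right hlip (norm_nonneg v), ht.1.le]
  have := hmono (Set.left_mem_Icc.2 zero_le_one) (Set.right_mem_Icc.2 zero_le_one) zero_le_one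
  simp only [hh, one_smul, zero_smul, add_zero, one_pow, mul_one, one_mul, zero_pow,
    mul_zero, zero_mul, sub_zero] at this
  have hy : x + v = y := by rw [hv]; abel
  rw [hy] at this
  linarith

set_option maxHeartbeats 1000000 in
theorem stmt_18 {d : ℕ} (f : EuclideanSpace ℝ (Fin d) → ℝ)
    (f' : EuclideanSpace ℝ (Fin d) → EuclideanSpace ℝ (Fin d))
    (L μ : ℝ) (hμ : 0 < μ) (hμL : μ ≤ L)
    (hgrad : ∀ x, HasGradientAt f (f' x) x)
    (hsmooth : ∀ x y, ‖f' x - f' y‖ ≤ L * ‖x - y‖)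
    (fs : ℝ) (hfs : ∀ x, fs ≤ f x)
    (hPL : ∀ x, ‖f' x‖ ^ 2 ≥ 2 * μ * (f x - fs))
    (β η : ℝ) (hβ0 : 0 ≤ β) (hβ1 : β < 1) (hη : 0 < η) :
    ∀ x m : EuclideanSpace ℝ (Fin d),
      ‖f' x‖ ^ 2 ≥ μ * (f (x - (β * η / (1 - β)) • m) - fs)
        - (μ * (μ + L) * β ^ 2 * η ^ 2 / (2 * (1 - β) ^ 2)) * ‖m‖ ^ 2 := by
  intro x m
  set c : ℝ := β * η / (1 - β) with hc
  have hβ1' : 0 < 1 - β := by linarith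
  have hc0 : 0 ≤ c := by positivity
  set w : EuclideanSpace ℝ (Fin d) := x - c • m with hw
  have hL0 : 0 ≤ L := le_trans hμ.le hμL
  have hdesc := descent_lemma f f' L hL0 hgrad hsmooth x w
  have hwx : w - x = -(c • m) := by rw [hw]; abel
  have hinner : (inner ℝ (f' x) (w - x) : ℝ) = -(c * inner ℝ (f' x) m) := by
    rw [hwx, inner_neg_right, real_inner_smul_right]
  have hnorm : ‖w - x‖ = c * ‖m‖ := by
    rw [hwx, norm_neg, norm_smul, Real.norm_eq_abs, abs_of_nonneg hc0]
  rw [hinner, hnorm] at hdesc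
  have hpl := hPL x
  have cs : -(inner ℝ (f' x) m : ℝ) ≤ ‖f' x‖ * ‖m‖ := by
    have := real_inner_le_norm (f' x) (-m)
    simpa using this
  -- Young's inequality: μ * c * ‖f' x‖ * ‖m‖ ≤ ‖f' x‖²/2 + μ²c²‖m‖²/2
  have young : μ * c * (‖f' x‖ * ‖m‖) ≤ ‖f' x‖ ^ 2 / 2 + μ ^ 2 * c ^ 2 * ‖m‖ ^ 2 / 2 := by
    nlinarith [sq_nonneg (‖f' x‖ - μ * c * ‖m‖)]
  have hcsq : μ * (μ + L) * β ^ 2 * η ^ 2 / (2 * (1 - β) ^ 2) * ‖m‖ ^ 2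
      = μ * (μ + L) * c ^ 2 * ‖m‖ ^ 2 / 2 := by
    rw [hc]; field_simp
  rw [ge_iff_le, hcsq]
  have key : μ * (f w - fs) ≤ μ * (f x - fs) + μ * (-(c * inner ℝ (f' x) m))
      + μ * (L / 2 * (c * ‖m‖) ^ 2) := by nlinarith
  have h1 : μ * (f x - fs) ≤ ‖f' x‖ ^ 2 / 2 := by linarith
  have h2 : μ * (-(c * (inner ℝ (f' x) m : ℝ))) ≤ μ * c * (‖f' x‖ * ‖m‖) := by
    have : -(inner ℝ (f' x) m : ℝ) * c ≤ ‖f' x‖ * ‖m‖ * c :=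
      mul_le_mul_of_nonneg_right cs hc0
    nlinarith
  nlinarith
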